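/- arXiv:2504.06734 — 3 statements merged into one kernel-verified Lean document; each statement's English description precedes it below -/
import Mathlib

section
/- Let t, ℓ, r, δ, h be positive integers with t | ℓ, ℓ/t > h ≥ 0, and δ ≥ 2. Set n_F = (ℓ+h)(r+δ-1), k = ℓr/t, d = δ + h(r+δ-1). Then Δ := n_F - 2d - (t-1)k + 2 - (⌈(t-1)k/r⌉ - 1)(δ-1) equals (ℓ/t - h - 1)(r+δ-1) + r, which is strictly positive, and t(k - Δ + (δ-1)⌊Δ/(r+δ-1)⌋) = thr. -/
/-- with `n_F = (ℓ+h)(r+δ-1)`, `k = ℓr/t`, `d = δ + h(r+δ-1)`, the quantity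
`Δ = n_F - 2d - (t-1)k + 2 - (⌈(t-1)k/r⌉-1)(δ-1)` equals `(ℓ/t - h - 1)(r+δ-1) + r > 0`,
and `t(k - Δ + (δ-1)⌊Δ/(r+δ-1)⌋) = thr`. -/
theorem stmt_5 {t ℓ r δ h : ℕ} (ht : 1 ≤ t) (hℓ : 1 ≤ ℓ) (hr : 1 ≤ r) (hδ : 2 ≤ δ)
    (hdvd : t ∣ ℓ) (hh : h < ℓ / t) :
    let nF : ℤ := ((ℓ : ℤ) + (h : ℤ)) * ((r : ℤ) + (δ : ℤ) - 1)
    let k : ℤ := (ℓ : ℤ) * (r : ℤ) / (t : ℤ)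
    let d : ℤ := (δ : ℤ) + (h : ℤ) * ((r : ℤ) + (δ : ℤ) - 1)
    let Δ : ℤ := nF - 2 * d - ((t : ℤ) - 1) * k + 2 -
      (⌈(((t : ℚ) - 1) * ((k : ℤ) : ℚ)) / (r : ℚ)⌉ - 1) * ((δ : ℤ) - 1)
    Δ = ((ℓ : ℤ) / (t : ℤ) - (h : ℤ) - 1) * ((r : ℤ) + (δ : ℤ) - 1) + (r : ℤ) ∧
    0 < Δ ∧
    (t : ℤ) * (k - Δ + ((δ : ℤ) - 1) * ⌊((Δ : ℤ) : ℚ) / ((r : ℚ) + (δ : ℚ) - 1)⌋) =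
      (t : ℤ) * (h : ℤ) * (r : ℤ) := by
  obtain ⟨m, rfl⟩ := hdvd
  intro nF k d Δ
  have ht0 : (t : ℤ) ≠ 0 := by positivity
  have hmnat : (t * m) / t = m := Nat.mul_div_cancel_left m ht
  rw [hmnat] at hh
  have hk : k = (m : ℤ) * r := by
    show ((t * m : ℕ) : ℤ) * r / t = (m : ℤ) * r
    push_cast
    rw [mul_assoc, Int.mul_ediv_cancel_left _ ht0]
  have hceil : ⌈(((t : ℚ) - 1) * ((k : ℤ) : ℚ)) / (r : ℚ)⌉ = ((t : ℤ) - 1) * m := by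
    rw [hk]
    have hr0 : (r : ℚ) ≠ 0 := by positivity
    have heq : (((t : ℚ) - 1) * (((m : ℤ) * r : ℤ) : ℚ)) / (r : ℚ)
        = ((((t : ℤ) - 1) * m : ℤ) : ℚ) := by
      push_cast; field_simp
    rw [heq, Int.ceil_intCast]
  have hΔ : Δ = ((m : ℤ) - h - 1) * ((r : ℤ) + δ - 1) + r := by
    show nF - 2 * d - ((t : ℤ) - 1) * k + 2 - _ = _
    rw [hceil, hk]
    show (((t * m : ℕ) : ℤ) + h) * ((r : ℤ) + δ - 1) - 2 * ((δ : ℤ) + h * ((r : ℤ) + δ - 1))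
        - ((t : ℤ) - 1) * ((m : ℤ) * r) + 2 - (((t : ℤ) - 1) * m - 1) * ((δ : ℤ) - 1) = _
    push_cast
    ring
  have hdiv : ((t * m : ℕ) : ℤ) / (t : ℤ) = m := by
    push_cast; exact Int.mul_ediv_cancel_left _ ht0
  have hh' : (h : ℤ) < m := by exact_mod_cast hh
  have hr' : (1:ℤ) ≤ r := by exact_mod_cast hr
  have hδ' : (2:ℤ) ≤ δ := by exact_mod_cast hδ
  have hpos : 0 < Δ := by
    rw [hΔ]
    have h1 : (0:ℤ) ≤ (m : ℤ) - h - 1 := by linarith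
    have h2 : (0:ℤ) ≤ (r : ℤ) + δ - 1 := by linarith
    nlinarith
  refine ⟨by rw [hdiv]; exact hΔ, hpos, ?_⟩
  have hδ1 : 1 ≤ δ := le_trans one_le_two hδ
  have hfloor : ⌊((Δ : ℤ) : ℚ) / ((r : ℚ) + (δ : ℚ) - 1)⌋ = (m : ℤ) - h - 1 := by
    have hden : ((r : ℚ) + (δ : ℚ) - 1) = ((r + (δ - 1) : ℕ) : ℚ) := by
      push_cast [Nat.cast_sub hδ1]; ring
    rw [hden, Rat.floor_intCast_div_natCast]
    have hD : ((r + (δ - 1) : ℕ) : ℤ) = (r : ℤ) + δ - 1 := by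
      push_cast [Nat.cast_sub hδ1]; ring
    rw [hD, hΔ, add_comm]
    have hDpos : (0:ℤ) < (r : ℤ) + δ - 1 := by
      have : (2:ℤ) ≤ δ := by exact_mod_cast hδ
      have : (1:ℤ) ≤ r := by exact_mod_cast hr
      linarith [(by exact_mod_cast hδ : (2:ℤ) ≤ (δ:ℤ))]
    rw [Int.add_mul_ediv_right _ _ (ne_of_gt hDpos)]
    have hrz : (r : ℤ) / ((r : ℤ) + δ - 1) = 0 := by
      apply Int.ediv_eq_zero_of_lt (by positivity)
      have : (2:ℤ) ≤ δ := by exact_mod_cast hδ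
      linarith
    rw [hrz]; ring
  rw [hfloor, hk, hΔ]
  ring
end

section
/- Let C be an [n,k,d]_q linear code with all-symbol (r,δ)-locality whose repair sets partition [n]. Suppose V is a finite set partitioned into groups of size at most r+δ-1 by intersecting with repair sets, where a greedy procedure repeatedly selects an uncovered element, takes min(δ-1, remaining elements in its repair set) elements, and removes that repair set. Then the greedy procedure yields pairwise disjoint sets V_{i_1},…,V_{i_{ℓ-1}} with total size at least (δ-1)·⌊|V|/(r+δ-1)⌋. Formally as a pure combinatorial statement: given a finite set V and a family of sets {S_i} covering V with each |S_i| ≤ r+δ-1, there exist disjoint subsets B_1,…,B_τ of V with |B_j| ≤ δ-1 for each j, each B_j contained in a single S_{i_j}, B_{j'} ∩ S_{i_j} = ∅ for j < j', and Σ_j |B_j| ≥ (δ-1)·⌊|V|/(r+δ-1)⌋. -/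
open Finset

private theorem stmt_8_aux {α : Type*} [DecidableEq α] {r δ : ℕ} (hr : 1 ≤ r) (hδ : 2 ≤ δ) :
    ∀ (V : Finset α) (S : α → Finset α),
      (∀ i ∈ V, i ∈ S i) → (∀ i ∈ V, (S i).card ≤ r + δ - 1) →
    ∃ (τ : ℕ) (idx : Fin τ → α) (B : Fin τ → Finset α),
      (∀ j, idx j ∈ V) ∧
      (∀ j, B j ⊆ V) ∧
      (∀ j, B j ⊆ S (idx j)) ∧
      (∀ j, (B j).card ≤ δ - 1) ∧
      (∀ j j' : Fin τ, j < j' → Disjoint (B j') (S (idx j))) ∧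
      (∀ j j' : Fin τ, j ≠ j' → Disjoint (B j) (B j')) ∧
      (δ - 1) * V.card ≤ (r + δ - 1) * ∑ j, (B j).card := by
  intro V
  induction V using Finset.strongInduction with
  | _ V ih =>
    intro S hmem hcard
    rcases V.eq_empty_or_nonempty with rfl | ⟨i, hi⟩
    · exact ⟨0, Fin.elim0, Fin.elim0, by simp, by simp, by simp, by simp,
        fun j => j.elim0, fun j => j.elim0, by simp⟩
    · set T := V ∩ S i with hT
      have hiT : i ∈ T := Finset.mem_inter.mpr ⟨hi, hmem i hi⟩
      obtain ⟨B₀, hB₀sub, hB₀card⟩ :=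
        Finset.exists_subset_card_eq (min_le_right (δ - 1) T.card)
      have hV' : V \ S i ⊂ V :=
        Finset.ssubset_iff_of_subset Finset.sdiff_subset |>.mpr
          ⟨i, hi, by simp [hmem i hi]⟩
      obtain ⟨τ', idx', B', h1, h2, h3, h4, h5, h6, h7⟩ :=
        ih (V \ S i) hV' S (fun j hj => hmem j (Finset.mem_sdiff.mp hj).1)
          (fun j hj => hcard j (Finset.mem_sdiff.mp hj).1)
      have hB₀V : B₀ ⊆ V := hB₀sub.trans Finset.inter_subset_left
      have hB₀S : B₀ ⊆ S i := hB₀sub.trans Finset.inter_subset_right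
      have hV'sub : V \ S i ⊆ V := Finset.sdiff_subset
      have hdisjS : ∀ j', Disjoint (B' j') (S i) := fun j' =>
        Finset.disjoint_left.mpr fun x hx hxS =>
          (Finset.mem_sdiff.mp (h2 j' hx)).2 hxS
      refine ⟨τ' + 1, Fin.cons i idx', Fin.cons B₀ B', ?_, ?_, ?_, ?_, ?_, ?_, ?_⟩
      · intro j
        rcases Fin.eq_zero_or_eq_succ j with rfl | ⟨k, rfl⟩
        · simpa using hi
        · simpa using hV'sub (h1 k)
      · intro j
        rcases Fin.eq_zero_or_eq_succ j with rfl | ⟨k, rfl⟩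
        · simpa using hB₀V
        · simpa using (h2 k).trans hV'sub
      · intro j
        rcases Fin.eq_zero_or_eq_succ j with rfl | ⟨k, rfl⟩
        · simpa using hB₀S
        · simpa using h3 k
      · intro j
        rcases Fin.eq_zero_or_eq_succ j with rfl | ⟨k, rfl⟩
        · simpa [hB₀card] using min_le_left (δ - 1) T.card
        · simpa using h4 k
      · intro j j' hlt
        rcases Fin.eq_zero_or_eq_succ j with rfl | ⟨a, rfl⟩
        · rcases Fin.eq_zero_or_eq_succ j' with rfl | ⟨k, rfl⟩
          · exact absurd hlt (lt_irrefl _)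
          · simpa using hdisjS k
        · rcases Fin.eq_zero_or_eq_succ j' with rfl | ⟨b, rfl⟩
          · exact absurd hlt (Fin.not_lt.mpr (Fin.zero_le _))
          · have hab : a < b := Fin.succ_lt_succ_iff.mp hlt
            simpa using h5 a b hab
      · intro j j' hne
        rcases Fin.eq_zero_or_eq_succ j with rfl | ⟨a, rfl⟩
        · rcases Fin.eq_zero_or_eq_succ j' with rfl | ⟨k, rfl⟩
          · exact absurd rfl hne
          · simpa using ((hdisjS k).mono_right hB₀S).symm
        · rcases Fin.eq_zero_or_eq_succ j' with rfl | ⟨b, rfl⟩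
          · simpa using (hdisjS a).mono_right hB₀S
          · have hab : a ≠ b := fun h => hne (by rw [h])
            simpa using h6 a b hab
      · rw [Fin.sum_univ_succ]
        simp only [Fin.cons_zero, Fin.cons_succ]
        have hTm : T.card ≤ r + δ - 1 :=
          (Finset.card_le_card Finset.inter_subset_right).trans (hcard i hi)
        have hδm : δ - 1 ≤ r + δ - 1 := by omega
        have hcardV : (V \ S i).card + T.card = V.card := by
          have : V \ S i = V \ T := by
            rw [hT, Finset.sdiff_inter_self_left]
          have hTV : T ⊆ V := Finset.inter_subset_left
          rw [this, Finset.card_sdiff_of_subset hTV]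
          have := Finset.card_le_card hTV
          omega
        have key : (δ - 1) * T.card ≤ (r + δ - 1) * min (δ - 1) T.card := by
          rcases le_total T.card (δ - 1) with h | h
          · rw [min_eq_right h]
            exact Nat.mul_le_mul_right _ hδm
          · rw [min_eq_left h]
            calc (δ - 1) * T.card ≤ (δ - 1) * (r + δ - 1) :=
                  Nat.mul_le_mul_left _ hTm
              _ = (r + δ - 1) * (δ - 1) := Nat.mul_comm _ _
        calc (δ - 1) * V.card = (δ - 1) * T.card + (δ - 1) * (V \ S i).card := by
              rw [← hcardV]; ring
          _ ≤ (r + δ - 1) * min (δ - 1) T.card + (r + δ - 1) * ∑ j, (B' j).card :=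
              Nat.add_le_add key h7
          _ = (r + δ - 1) * (B₀.card + ∑ j, (B' j).card) := by rw [hB₀card]; ring

/-- greedy selection of disjoint subsets inside repair sets: given a finite set
`V` and a family `S` of sets with `i ∈ S i` and `|S i| ≤ r+δ-1`, there exist disjoint
subsets `B_1,…,B_τ` of `V`, each of size at most `δ-1`, each contained in a single repair
set `S (idx j)`, with `B_{j'} ∩ S (idx j) = ∅` for `j < j'`, and total size at least
`(δ-1)·⌊|V|/(r+δ-1)⌋`. -/
theorem stmt_8 {α : Type*} [DecidableEq α] {r δ : ℕ} (hr : 1 ≤ r) (hδ : 2 ≤ δ)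
    (V : Finset α) (S : α → Finset α)
    (hmem : ∀ i ∈ V, i ∈ S i) (hcard : ∀ i ∈ V, (S i).card ≤ r + δ - 1) :
    ∃ (τ : ℕ) (idx : Fin τ → α) (B : Fin τ → Finset α),
      (∀ j, idx j ∈ V) ∧
      (∀ j, B j ⊆ V) ∧
      (∀ j, B j ⊆ S (idx j)) ∧
      (∀ j, (B j).card ≤ δ - 1) ∧
      (∀ j j' : Fin τ, j < j' → Disjoint (B j') (S (idx j))) ∧
      (∀ j j' : Fin τ, j ≠ j' → Disjoint (B j) (B j')) ∧
      (δ - 1) * (V.card / (r + δ - 1)) ≤ ∑ j, (B j).card := by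
  obtain ⟨τ, idx, B, c1, c2, c3, c4, c5, c6, c7⟩ :=
    stmt_8_aux hr hδ V S hmem hcard
  refine ⟨τ, idx, B, c1, c2, c3, c4, c5, c6, ?_⟩
  have hm : 0 < r + δ - 1 := by omega
  calc (δ - 1) * (V.card / (r + δ - 1)) ≤ (δ - 1) * V.card / (r + δ - 1) :=
        Nat.mul_div_le_mul_div_assoc _ _ _
    _ ≤ (r + δ - 1) * (∑ j, (B j).card) / (r + δ - 1) := Nat.div_le_div_right c7
    _ = ∑ j, (B j).card := Nat.mul_div_cancel_left _ hm
end

section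
/- Let g, ℓ, r, δ be positive integers with g ≥ ℓ and δ ≥ 2, and let C be a linear code of length g(r+δ-1) over F_q with a parity check matrix H consisting of a block-diagonal part with g blocks A_1,…,A_g each of size (δ-1)×(r+δ-1), together with a bottom row of blocks B_1,…,B_g each of size (g-ℓ)r × (r+δ-1). Suppose C has dimension ℓr and minimum distance d = (g-ℓ)(r+δ-1) + δ (meeting the Singleton-type bound for (r,δ)-locality). Then for any subset P ⊆ [g] with |P| > g-ℓ, the code with parity check matrix H||_P (obtained by keeping the diagonal blocks A_i for i ∈ P and the corresponding bottom blocks B_i) has length |P|(r+δ-1), dimension (|P| - g + ℓ)r, and minimum distance exactly d. -/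
open Finset

/-- The linear code (as a submodule) with block parity check matrix consisting of the
diagonal local blocks `A i` and the global bottom row blocks `B i`: a vector `x` is a
codeword iff `A i *ᵥ x i = 0` for all `i` and `∑ i, B i *ᵥ x i = 0`. -/
noncomputable def checkKer {F : Type*} [Field F] {a b m : ℕ} {ι : Type*} [Fintype ι]
    (A : ι → Matrix (Fin a) (Fin m) F) (B : ι → Matrix (Fin b) (Fin m) F) :
    Submodule F (ι → Fin m → F) :=
  LinearMap.ker
    ((LinearMap.pi fun i => (A i).mulVecLin.comp (LinearMap.proj i)).prod
      (∑ i, (B i).mulVecLin.comp (LinearMap.proj i)))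

/-- Hamming weight of a block-indexed vector. -/
def wt {F : Type*} [Zero F] [DecidableEq F] {m : ℕ} {ι : Type*} [Fintype ι]
    (x : ι → Fin m → F) : ℕ :=
  ∑ i, (Finset.univ.filter fun j => x i j ≠ 0).card

theorem mem_checkKer_iff {F : Type*} [Field F] {a b m : ℕ} {ι : Type*} [Fintype ι]
    (A : ι → Matrix (Fin a) (Fin m) F) (B : ι → Matrix (Fin b) (Fin m) F)
    (x : ι → Fin m → F) :
    x ∈ checkKer A B ↔ (∀ i, (A i).mulVec (x i) = 0) ∧ ∑ i, (B i).mulVec (x i) = 0 := by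
  simp [checkKer, LinearMap.mem_ker, LinearMap.prod_apply, Prod.ext_iff,
    LinearMap.pi_apply, funext_iff, LinearMap.sum_apply, Matrix.mulVecLin_apply]

def extFun {F : Type*} [Zero F] {g m : ℕ} (P : Finset (Fin g)) (x : ↥P → Fin m → F) :
    Fin g → Fin m → F := fun i => if h : i ∈ P then x ⟨i, h⟩ else 0

theorem extFun_mem {F : Type*} [Field F] {a b m g : ℕ}
    (A : Fin g → Matrix (Fin a) (Fin m) F) (B : Fin g → Matrix (Fin b) (Fin m) F)
    (P : Finset (Fin g)) (x : ↥P → Fin m → F)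
    (hx : x ∈ checkKer (fun i : P => A i) (fun i : P => B i)) :
    extFun P x ∈ checkKer A B := by
  rw [mem_checkKer_iff] at hx ⊢
  obtain ⟨h1, h2⟩ := hx
  constructor
  · intro i
    by_cases h : i ∈ P
    · simpa [extFun, h] using h1 ⟨i, h⟩
    · simp [extFun, h]
  · rw [← Finset.sum_subset (Finset.subset_univ P)
      (fun i _ hi => by simp [extFun, hi])]
    rw [← Finset.sum_attach P (fun i => (B i).mulVec (extFun P x i))]
    simpa [extFun] using h2

theorem extFun_wt {F : Type*} [Field F] [DecidableEq F] {m g : ℕ}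
    (P : Finset (Fin g)) (x : ↥P → Fin m → F) : wt (extFun P x) = wt x := by
  unfold wt
  rw [← Finset.sum_subset (Finset.subset_univ P)
      (fun i _ hi => by simp [extFun, hi])]
  rw [← Finset.sum_attach P (fun i => (Finset.univ.filter fun j => extFun P x i j ≠ 0).card)]
  refine Finset.sum_congr rfl fun i _ => ?_
  congr 1
  refine Finset.filter_congr fun j _ => ?_
  simp [extFun]

theorem extFun_ne {F : Type*} [Field F] {m g : ℕ}
    (P : Finset (Fin g)) (x : ↥P → Fin m → F) (hx : x ≠ 0) : extFun P x ≠ 0 := by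
  intro h0
  apply hx
  funext i
  have := congrFun h0 ↑i
  simpa [extFun] using this

theorem exists_low_weight {F : Type*} [Field F] [DecidableEq F] {a b m r : ℕ}
    {ι : Type*} [Fintype ι] [DecidableEq ι]
    (A : ι → Matrix (Fin a) (Fin m) F) (B : ι → Matrix (Fin b) (Fin m) F)
    (hkA : ∀ i, Module.finrank F (LinearMap.ker (Matrix.mulVecLin (A i))) = r)
    (Q : Finset ι) (i₀ : ι) (hi₀ : i₀ ∈ Q) {t : ℕ} (htm : t ≤ m)
    (hlt : (Fintype.card ι - Q.card) * r + t < Module.finrank F (checkKer A B)) :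
    ∃ x ∈ checkKer A B, x ≠ 0 ∧ wt x ≤ (Q.card - 1) * m + (m - t) := by
  classical
  set C := checkKer A B with hC
  let Ψ₁ : ↥C →ₗ[F] (Π i : ↥(univ \ Q : Finset ι),
      ↥(LinearMap.ker (Matrix.mulVecLin (A i.1)))) :=
    LinearMap.pi fun i =>
      LinearMap.codRestrict _ ((LinearMap.proj i.1).comp C.subtype) (fun y => by
        have := ((mem_checkKer_iff A B y.1).mp y.2).1 i.1
        simpa [LinearMap.mem_ker, Matrix.mulVecLin_apply] using this)
  let Ψ₂ : ↥C →ₗ[F] (Fin t → F) :=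
    (LinearMap.funLeft F F (Fin.castLE htm)).comp ((LinearMap.proj i₀).comp C.subtype)
  let Ψ := Ψ₁.prod Ψ₂
  have hcodim : Module.finrank F ((Π i : ↥(univ \ Q : Finset ι),
      ↥(LinearMap.ker (Matrix.mulVecLin (A i.1)))) × (Fin t → F)) =
      (Fintype.card ι - Q.card) * r + t := by
    rw [Module.finrank_prod, Module.finrank_pi_fintype, Module.finrank_fin_fun]
    congr 1
    calc (∑ i : ↥(univ \ Q : Finset ι),
        Module.finrank F (LinearMap.ker (Matrix.mulVecLin (A i.1))))
        = ∑ _i : ↥(univ \ Q : Finset ι), r := by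
          exact Finset.sum_congr rfl fun i _ => hkA i.1
      _ = (Fintype.card ι - Q.card) * r := by
          rw [Finset.sum_const, smul_eq_mul, Finset.card_univ, Fintype.card_coe,
            Finset.card_sdiff_of_subset (Finset.subset_univ Q), Finset.card_univ]
  have hninj : ¬ Function.Injective Ψ := by
    intro hinj
    have := LinearMap.finrank_le_finrank_of_injective hinj
    rw [hcodim] at this
    omega
  have hker : LinearMap.ker Ψ ≠ ⊥ := fun h => hninj (LinearMap.ker_eq_bot.mp h)
  obtain ⟨y, hyk, hy0⟩ := Submodule.exists_mem_ne_zero_of_ne_bot hker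
  have hpair : Ψ₁ y = 0 ∧ Ψ₂ y = 0 := by
    have h := LinearMap.mem_ker.mp hyk
    rw [show Ψ y = (Ψ₁ y, Ψ₂ y) from rfl, Prod.mk_eq_zero] at h
    exact h
  have hΨ1 : Ψ₁ y = 0 := hpair.1
  have hΨ2 : Ψ₂ y = 0 := hpair.2
  refine ⟨y.1, y.2, ?_, ?_⟩
  · simpa using hy0
  -- kill facts
  have hkill : ∀ i : ι, i ∉ Q → y.1 i = 0 := by
    intro i hi
    have hi' : i ∈ univ \ Q := by simp [hi]
    have := congrFun hΨ1 ⟨i, hi'⟩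
    have := congrArg Subtype.val this
    simpa [Ψ₁, LinearMap.pi_apply, LinearMap.codRestrict] using this
  have hkill₂ : ∀ j : Fin t, y.1 i₀ (Fin.castLE htm j) = 0 := by
    intro j
    have := congrFun hΨ2 j
    simpa [Ψ₂, LinearMap.funLeft] using this
  -- weight bound
  have hwt : wt y.1 = ∑ i ∈ Q, (Finset.univ.filter fun j => y.1 i j ≠ 0).card := by
    unfold wt
    rw [← Finset.sum_subset (Finset.subset_univ Q)
      (fun i _ hi => by simp [hkill i hi])]
  rw [hwt, Finset.sum_eq_sum_sdiff_singleton_add hi₀]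
  have h1 : ∑ i ∈ Q \ {i₀}, (Finset.univ.filter fun j => y.1 i j ≠ 0).card ≤
      (Q.card - 1) * m := by
    have := Finset.sum_le_card_nsmul (Q \ {i₀})
      (fun i => (Finset.univ.filter fun j => y.1 i j ≠ 0).card) m
      (fun i _ => le_trans (Finset.card_filter_le _ _) (by simp))
    rwa [Finset.card_sdiff_of_subset (by simpa using hi₀), Finset.card_singleton, smul_eq_mul] at this
  have h2 : (Finset.univ.filter fun j => y.1 i₀ j ≠ 0).card ≤ m - t := by
    have hsub : (Finset.univ.filter fun j => y.1 i₀ j ≠ 0) ⊆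
        Finset.univ \ (Finset.univ.image (Fin.castLE htm)) := by
      intro j hj
      simp only [Finset.mem_filter, Finset.mem_univ, true_and] at hj
      simp only [Finset.mem_sdiff, Finset.mem_univ, Finset.mem_image, true_and]
      rintro ⟨j', -, rfl⟩
      exact hj (hkill₂ j')
    calc (Finset.univ.filter fun j => y.1 i₀ j ≠ 0).card
        ≤ (Finset.univ \ (Finset.univ.image (Fin.castLE htm))).card :=
          Finset.card_le_card hsub
      _ = m - t := by
          rw [Finset.card_sdiff_of_subset (Finset.subset_univ _),
            Finset.card_image_of_injective _ (Fin.castLE_injective htm)]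
          simp
  omega

section helpers
variable {F : Type*} [Field F]

theorem rankA_eq {g ℓ r δ : ℕ}
    (hδ : 2 ≤ δ) (hℓg : ℓ ≤ g)
    (A : Fin g → Matrix (Fin (δ - 1)) (Fin (r + δ - 1)) F)
    (B : Fin g → Matrix (Fin ((g - ℓ) * r)) (Fin (r + δ - 1)) F)
    (hdim : Module.finrank F (checkKer A B) = ℓ * r) :
    ∀ i, Module.finrank F (LinearMap.ker (Matrix.mulVecLin (A i))) = r := by
  classical
  set L := ((LinearMap.pi fun i => (A i).mulVecLin.comp (LinearMap.proj i)).prod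
      (∑ i, (B i).mulVecLin.comp (LinearMap.proj i))) with hL
  have hdom : Module.finrank F (Fin g → Fin (r + δ - 1) → F) = g * (r + δ - 1) := by
    rw [Module.finrank_pi_fintype]
    simp [Module.finrank_fin_fun, Finset.sum_const, Finset.card_univ]
  have hcod : Module.finrank F ((Fin g → Fin (δ - 1) → F) × (Fin ((g - ℓ) * r) → F)) =
      g * (δ - 1) + (g - ℓ) * r := by
    rw [Module.finrank_prod, Module.finrank_pi_fintype, Module.finrank_fin_fun]
    simp [Module.finrank_fin_fun, Finset.sum_const, Finset.card_univ]
  have hrn := LinearMap.finrank_range_add_finrank_ker L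
  rw [hdom] at hrn
  have hdim' : Module.finrank F (LinearMap.ker L) = ℓ * r := hdim
  rw [hdim'] at hrn
  have hle : Module.finrank F (LinearMap.range L) ≤ g * (δ - 1) + (g - ℓ) * r := by
    rw [← hcod]; exact Submodule.finrank_le _
  have hsurj : Function.Surjective L := by
    rw [← LinearMap.range_eq_top]
    apply Submodule.eq_top_of_finrank_eq
    rw [hcod]
    have e1 : g * (r + δ - 1) = g * r + g * (δ - 1) := by
      rw [← Nat.mul_add]; congr 1; omega
    have e2 : (g - ℓ) * r = g * r - ℓ * r := Nat.sub_mul g ℓ r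
    have e3 : ℓ * r ≤ g * r := Nat.mul_le_mul_right r hℓg
    omega
  intro i
  have hAsurj : Function.Surjective (Matrix.mulVecLin (A i)) := by
    intro v
    obtain ⟨x, hx⟩ := hsurj (Pi.single i v, 0)
    refine ⟨x i, ?_⟩
    have := congrFun (congrArg Prod.fst hx) i
    simpa [L, LinearMap.prod_apply, LinearMap.pi_apply, Matrix.mulVecLin_apply,
      Pi.single_eq_same] using this
  have h := LinearMap.finrank_range_add_finrank_ker (Matrix.mulVecLin (A i))
  rw [LinearMap.range_eq_top.mpr hAsurj, finrank_top] at h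
  simp only [Module.finrank_pi, Fintype.card_fin] at h
  omega

end helpers

/-- Lemma 9: if the code with parity check matrix `H` (block-diagonal local
parts `A i` and bottom blocks `B i`) has dimension `ℓr` and minimum distance exactly
`d = (g-ℓ)(r+δ-1)+δ`, then for any `P ⊆ [g]` with `|P| > g-ℓ` the code with parity check
matrix `H‖_P` has dimension `(|P|-g+ℓ)r` and minimum distance exactly `d`. -/
theorem stmt_10 {F : Type*} [Field F] [DecidableEq F] {g ℓ r δ : ℕ}
    (hδ : 2 ≤ δ) (hr : 1 ≤ r) (hℓ : 1 ≤ ℓ) (hℓg : ℓ ≤ g)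
    (A : Fin g → Matrix (Fin (δ - 1)) (Fin (r + δ - 1)) F)
    (B : Fin g → Matrix (Fin ((g - ℓ) * r)) (Fin (r + δ - 1)) F)
    (hdim : Module.finrank F (checkKer A B) = ℓ * r)
    (hlow : ∀ x ∈ checkKer A B, x ≠ 0 → (g - ℓ) * (r + δ - 1) + δ ≤ wt x)
    (hex : ∃ x ∈ checkKer A B, x ≠ 0 ∧ wt x = (g - ℓ) * (r + δ - 1) + δ)
    (P : Finset (Fin g)) (hP : g - ℓ < P.card) :
    Module.finrank F (checkKer (fun i : P => A i) (fun i : P => B i)) =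
        (P.card + ℓ - g) * r ∧
      (∀ x ∈ checkKer (fun i : P => A i) (fun i : P => B i), x ≠ 0 →
        (g - ℓ) * (r + δ - 1) + δ ≤ wt x) ∧
      (∃ x ∈ checkKer (fun i : P => A i) (fun i : P => B i), x ≠ 0 ∧
        wt x = (g - ℓ) * (r + δ - 1) + δ) := by
  classical
  have hkA := rankA_eq hδ hℓg A B hdim
  set CP := checkKer (fun i : P => A i) (fun i : P => B i) with hCP
  -- generic arithmetic facts
  have e1 : P.card * (r + δ - 1) = P.card * r + P.card * (δ - 1) := by
    rw [← Nat.mul_add]; congr 1; omega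
  have e2 : (g - ℓ) * r = g * r - ℓ * r := Nat.sub_mul g ℓ r
  have e3 : ℓ * r ≤ g * r := Nat.mul_le_mul_right r hℓg
  have e4 : (P.card + ℓ - g) * r = (P.card + ℓ) * r - g * r := Nat.sub_mul _ g r
  have e5 : (P.card + ℓ) * r = P.card * r + ℓ * r := Nat.add_mul _ _ _
  have e6 : g * r ≤ (P.card + ℓ) * r := Nat.mul_le_mul_right r (by omega)
  -- lower bound for dim CP
  have hdown : (P.card + ℓ - g) * r ≤ Module.finrank F CP := by
    set LP := ((LinearMap.pi fun i : P =>
        (A i.1).mulVecLin.comp (LinearMap.proj i)).prod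
        (∑ i : P, (B i.1).mulVecLin.comp (LinearMap.proj i))) with hLP
    have hrn := LinearMap.finrank_range_add_finrank_ker LP
    have hdom : Module.finrank F (↥P → Fin (r + δ - 1) → F) = P.card * (r + δ - 1) := by
      rw [Module.finrank_pi_fintype]
      simp [Module.finrank_fin_fun, Finset.sum_const, Finset.card_univ, Fintype.card_coe]
    have hle : Module.finrank F (LinearMap.range LP) ≤
        P.card * (δ - 1) + (g - ℓ) * r := by
      refine le_trans (Submodule.finrank_le _) (le_of_eq ?_)
      rw [Module.finrank_prod, Module.finrank_pi_fintype, Module.finrank_fin_fun]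
      simp [Module.finrank_fin_fun, Finset.sum_const, Finset.card_univ, Fintype.card_coe]
    rw [hdom] at hrn
    have hker : Module.finrank F (LinearMap.ker LP) = Module.finrank F CP := rfl
    rw [hker] at hrn
    omega
  -- choose Q
  obtain ⟨Q, -, hQcard⟩ := Finset.exists_subset_card_eq
    (show g - ℓ + 1 ≤ (Finset.univ : Finset ↥P).card by
      rw [Finset.card_univ, Fintype.card_coe]; omega)
  obtain ⟨i₀, hi₀⟩ := Finset.card_pos.mp (by omega : 0 < Q.card)
  have hkA' : ∀ i : ↥P, Module.finrank F
      (LinearMap.ker (Matrix.mulVecLin ((fun i : P => A i) i))) = r := fun i => hkA i.1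
  -- upper bound for dim CP
  have hup : Module.finrank F CP ≤ (P.card + ℓ - g) * r := by
    by_contra hcon
    push_neg at hcon
    have htm : r ≤ r + δ - 1 := by omega
    have hlt : (Fintype.card ↥P - Q.card) * r + r < Module.finrank F CP := by
      rw [Fintype.card_coe, hQcard]
      have he : P.card - (g - ℓ + 1) + 1 = P.card + ℓ - g := by omega
      calc (P.card - (g - ℓ + 1)) * r + r = (P.card - (g - ℓ + 1) + 1) * r := by
            rw [Nat.add_mul, Nat.one_mul]
        _ = (P.card + ℓ - g) * r := by rw [he]
        _ < Module.finrank F CP := hcon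
    obtain ⟨x, hxm, hx0, hxw⟩ := exists_low_weight (fun i : P => A i) (fun i : P => B i)
      hkA' Q i₀ hi₀ htm hlt
    have hzw := extFun_wt P x
    have hlw := hlow (extFun P x) (extFun_mem A B P x hxm) (extFun_ne P x hx0)
    rw [hzw] at hlw
    have : (Q.card - 1) * (r + δ - 1) + (r + δ - 1 - r) <
        (g - ℓ) * (r + δ - 1) + δ := by
      rw [hQcard]
      have : g - ℓ + 1 - 1 = g - ℓ := by omega
      rw [this]
      omega
    omega
  have hdimP : Module.finrank F CP = (P.card + ℓ - g) * r := le_antisymm hup hdown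
  refine ⟨hdimP, ?_, ?_⟩
  · intro x hxm hx0
    have := hlow (extFun P x) (extFun_mem A B P x hxm) (extFun_ne P x hx0)
    rwa [extFun_wt] at this
  · have htm : r - 1 ≤ r + δ - 1 := by omega
    have hlt : (Fintype.card ↥P - Q.card) * r + (r - 1) < Module.finrank F CP := by
      rw [Fintype.card_coe, hQcard, hdimP]
      have he : P.card - (g - ℓ + 1) + 1 = P.card + ℓ - g := by omega
      calc (P.card - (g - ℓ + 1)) * r + (r - 1)
          < (P.card - (g - ℓ + 1) + 1) * r := by rw [Nat.add_mul, Nat.one_mul]; omega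
        _ = (P.card + ℓ - g) * r := by rw [he]
    obtain ⟨x, hxm, hx0, hxw⟩ := exists_low_weight (fun i : P => A i) (fun i : P => B i)
      hkA' Q i₀ hi₀ htm hlt
    refine ⟨x, hxm, hx0, ?_⟩
    have hlw := hlow (extFun P x) (extFun_mem A B P x hxm) (extFun_ne P x hx0)
    rw [extFun_wt] at hlw
    have hub : (Q.card - 1) * (r + δ - 1) + (r + δ - 1 - (r - 1)) =
        (g - ℓ) * (r + δ - 1) + δ := by
      rw [hQcard]
      have h1 : g - ℓ + 1 - 1 = g - ℓ := by omega
      rw [h1]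
      omega
    omega
end
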